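/- (Consistency is preserved under lifetime termination) If 𝓛 | Γ ⊢ ⟨H, R⟩ and α is a minimal element of 𝓛, then 𝓛↑α | Γ↑α ⊢ ⟨H, R⟩. -/

import Mathlib

set_option autoImplicit true
set_option maxHeartbeats 1000000

namespace BorFrac

/-! ## Basic syntax of the source language -/

abbrev Var := String
abbrev FName := String
abbrev Lft := String
abbrev Addr := ℕ

/-- Runtime values of the source language: integers or heap addresses. -/
inductive SrcVal : Type
  | int (n : ℤ)
  | addr (a : Addr)
deriving DecidableEq

/-- A heap is a partial map from addresses to values. -/
abbrev Heap := Addr → Option SrcVal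
/-- A register is a partial map from variables to values. -/
abbrev Reg := Var → Option SrcVal

/-- Arithmetic expressions. -/
inductive AExp : Type
  | const (n : ℤ)
  | var (x : Var)
  | binop (op : ℤ → ℤ → ℤ) (o₁ o₂ : AExp)

/-- Evaluation of arithmetic expressions under a register. -/
def AExp.eval (R : Reg) : AExp → Option ℤ
  | .const n => some n
  | .var x =>
    match R x with
    | some (SrcVal.int n) => some n
    | _ => none
  | .binop f o₁ o₂ =>
    match o₁.eval R, o₂.eval R with
    | some n₁, some n₂ => some (f n₁ n₂)
    | _, _ => none

/-- Expressions of the source language. -/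
inductive Expr : Type
  | var (x : Var)
  | letArith (x : Var) (o : AExp) (e : Expr)
  | letVar (x y : Var) (e : Expr)
  | letMkref (x y : Var) (e : Expr)
  | letDeref (x y : Var) (e : Expr)
  | assign (x y : Var) (e : Expr)
  | ifz (x : Var) (e₁ e₂ : Expr)
  | letCall (x : Var) (f : FName) (lfts : List Lft) (args : List Var) (e : Expr)
  | aliasAssume (x y : Var) (e : Expr)
  | newlft (α : Lft) (e : Expr)
  | endlft (α : Lft) (e : Expr)
  | fail

/-- Variable renaming: `vsub x' x y` renames `y` to `x'` if `y = x`. -/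
def vsub (x' x y : Var) : Var := if y = x then x' else y

def AExp.substVar (x' x : Var) : AExp → AExp
  | .const n => .const n
  | .var y => .var (vsub x' x y)
  | .binop f o₁ o₂ => .binop f (o₁.substVar x' x) (o₂.substVar x' x)

/-- Substitution `[x'/x]e` of the variable `x'` for the variable `x`
(binders shadow, matching the paper's convention of uniquely named binders). -/
def Expr.substVar (x' x : Var) : Expr → Expr
  | .var y => .var (vsub x' x y)
  | .letArith y o e => .letArith y (o.substVar x' x) (if y = x then e else e.substVar x' x)
  | .letVar y z e => .letVar y (vsub x' x z) (if y = x then e else e.substVar x' x)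
  | .letMkref y z e => .letMkref y (vsub x' x z) (if y = x then e else e.substVar x' x)
  | .letDeref y z e => .letDeref y (vsub x' x z) (if y = x then e else e.substVar x' x)
  | .assign y z e => .assign (vsub x' x y) (vsub x' x z) (e.substVar x' x)
  | .ifz y e₁ e₂ => .ifz (vsub x' x y) (e₁.substVar x' x) (e₂.substVar x' x)
  | .letCall y f ls args e =>
      .letCall y f ls (args.map (vsub x' x)) (if y = x then e else e.substVar x' x)
  | .aliasAssume y z e => .aliasAssume (vsub x' x y) (vsub x' x z) (e.substVar x' x)
  | .newlft α e => .newlft α (e.substVar x' x)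
  | .endlft α e => .endlft α (e.substVar x' x)
  | .fail => .fail

/-- Simultaneous substitution `[y₁/x₁]⋯[yₙ/xₙ]e`. -/
def multiSubst (params ys : List Var) (e : Expr) : Expr :=
  (params.zip ys).foldr (fun p acc => acc.substVar p.2 p.1) e

/-- A function definition `f ↦ ⟨ᾱ⟩(x₁,…,xₙ) e`. -/
structure FunDef : Type where
  lfts : List Lft
  params : List Var
  body : Expr

/-- A set of function definitions, as a partial map from function names. -/
abbrev Defs := FName → Option FunDef

/-- A return context `(let x = [] in e)`. -/
structure Frame : Type where
  x : Var
  e : Expr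

def updR (R : Reg) (x : Var) (v : Option SrcVal) : Reg := fun z => if z = x then v else R z
def updH (H : Heap) (a : Addr) (v : Option SrcVal) : Heap := fun b => if b = a then v else H b

def emptyHeap : Heap := fun _ => none
def emptyReg : Reg := fun _ => none
def emptyDefs : Defs := fun _ => none

/-- Runtime configurations of the source language, together with the
failure states `Fail` and `AliasFail`. -/
inductive SrcConf : Type
  | run (H : Heap) (R : Reg) (stk : List Frame) (e : Expr)
  | fail
  | aliasFail

/-- One-step reduction of the source language. -/
inductive Step (D : Defs) : SrcConf → SrcConf → Prop
  | retVar :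
      Step D (.run H R (⟨x', e⟩ :: F) (.var x)) (.run H R F (e.substVar x x'))
  | arith :
      AExp.eval R o = some n → R x' = none →
      Step D (.run H R F (.letArith x o e))
        (.run H (updR R x' (some (SrcVal.int n))) F (e.substVar x' x))
  | letVar :
      R x' = none → R y = some v →
      Step D (.run H R F (.letVar x y e))
        (.run H (updR R x' (some v)) F (e.substVar x' x))
  | call :
      D f = some fd → R x' = none →
      Step D (.run H R F (.letCall x f βs ys e'))
        (.run H R (⟨x', e'.substVar x' x⟩ :: F) (multiSubst fd.params ys fd.body))
  | mkref :
      H a = none → R x' = none → R y = some v →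
      Step D (.run H R F (.letMkref x y e))
        (.run (updH H a (some v)) (updR R x' (some (SrcVal.addr a))) F (e.substVar x' x))
  | deref :
      R y = some (SrcVal.addr a) → H a = some v → R x' = none →
      Step D (.run H R F (.letDeref x y e))
        (.run H (updR R x' (some v)) F (e.substVar x' x))
  | assign :
      R x = some (SrcVal.addr a) → (H a).isSome → R y = some v →
      Step D (.run H R F (.assign x y e)) (.run (updH H a (some v)) R F e)
  | ifTrue :
      R x = some (SrcVal.int 0) →
      Step D (.run H R F (.ifz x e₁ e₂)) (.run H R F e₁)
  | ifFalse :
      R x = some v → v ≠ SrcVal.int 0 →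
      Step D (.run H R F (.ifz x e₁ e₂)) (.run H R F e₂)
  | aliasOk :
      R x = some v → R y = some v →
      Step D (.run H R F (.aliasAssume x y e)) (.run H R F e)
  | aliasFail :
      R x ≠ R y →
      Step D (.run H R F (.aliasAssume x y e)) .aliasFail
  | newlft :
      Step D (.run H R F (.newlft α e)) (.run H R F e)
  | endlft :
      Step D (.run H R F (.endlft α e)) (.run H R F e)
  | fail :
      Step D (.run H R F .fail) .fail

/-! ## Types -/

/-- Types: `int` or an integer-reference type `ref^{α,r}_B` with lifetime `α`,
fractional ownership `r` and borrowing `B` (either `∅` or a pair `(β, s)`). -/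
inductive Ty : Type
  | int
  | ref (α : Lft) (r : NNReal) (B : Option (Lft × NNReal))

def Ty.own : Ty → NNReal
  | .int => 0
  | .ref _ r _ => r

def Ty.lft : Ty → Option Lft
  | .int => none
  | .ref α _ _ => some α

def Ty.bown : Ty → NNReal
  | .ref _ _ (some (_, s)) => s
  | _ => 0

def Ty.blft : Ty → Option Lft
  | .ref _ _ (some (β, _)) => some β
  | _ => none

/-- A lifetime environment: a (strict order) relation on a finite set of lifetime
variables.  Being a strict partial order is expressed by `LftEnv.IsSPO`. -/
structure LftEnv : Type where
  dom : Finset Lft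
  lt : Lft → Lft → Prop

/-- A lifetime environment is a strict partial order on its domain. -/
def LftEnv.IsSPO (L : LftEnv) : Prop :=
  (∀ a b, L.lt a b → a ∈ L.dom ∧ b ∈ L.dom) ∧
  (∀ a, ¬ L.lt a a) ∧
  (∀ a b c, L.lt a b → L.lt b c → L.lt a c)

def LftEnv.empty : LftEnv := ⟨∅, fun _ _ => False⟩

/-- `𝓛 ∪ {α}` where the fresh lifetime `α` becomes the minimum. -/
def LftEnv.addMin (L : LftEnv) (α : Lft) : LftEnv :=
  ⟨insert α L.dom, fun a b => L.lt a b ∨ (a = α ∧ b ∈ L.dom)⟩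

/-- `𝓛↑α`: the subposet induced on `𝓛 \ {α}`. -/
def LftEnv.strip (L : LftEnv) (α : Lft) : LftEnv :=
  ⟨L.dom.erase α, fun a b => L.lt a b ∧ a ≠ α ∧ b ≠ α⟩

/-- `α` is a minimal element of `𝓛`. -/
def LftEnv.IsMinIn (L : LftEnv) (α : Lft) : Prop :=
  α ∈ L.dom ∧ ∀ β, ¬ L.lt β α

/-- The image of a lifetime environment under a renaming of lifetime variables. -/
def LftEnv.map (σ : Lft → Lft) (L : LftEnv) : LftEnv :=
  ⟨L.dom.image σ,
   fun a b => ∃ a' ∈ L.dom, ∃ b' ∈ L.dom, σ a' = a ∧ σ b' = b ∧ L.lt a' b'⟩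

/-- Constraint inclusion `𝓜 ⊆ 𝓛` (all constraints of `𝓜` hold in `𝓛`). -/
def LftEnv.SubC (M L : LftEnv) : Prop :=
  (∀ a ∈ M.dom, a ∈ L.dom) ∧ ∀ a b, M.lt a b → L.lt a b

/-- Inclusion `𝓛 ⊆ 𝓛'`: the inclusion map is an injection preserving and
reflecting the strict order. -/
def LftEnv.Sub (L L' : LftEnv) : Prop :=
  (∀ a ∈ L.dom, a ∈ L'.dom) ∧ ∀ a ∈ L.dom, ∀ b ∈ L.dom, (L.lt a b ↔ L'.lt a b)

/-- Renaming of a single lifetime variable: `lsub β α` maps `α` to `β`. -/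
def lsub (β α : Lft) : Lft → Lft := fun γ => if γ = α then β else γ

/-- The simultaneous substitution `[β̄/ᾱ]` of lifetime variables. -/
def lftSubst (αs βs : List Lft) : Lft → Lft :=
  fun γ => (List.lookup γ (αs.zip βs)).getD γ

/-- Applying a lifetime renaming to a type. -/
def Ty.mapLft (σ : Lft → Lft) : Ty → Ty
  | .int => .int
  | .ref α r B => .ref (σ α) r (B.map (fun p => (σ p.1, p.2)))

/-- Type environments: finite lists of type bindings. -/
abbrev TyEnv := List (Var × Ty)

def TyEnv.dom (Γ : TyEnv) : List Var := Γ.map Prod.fst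

def lookupTy (Γ : TyEnv) (x : Var) : Option Ty := List.lookup x Γ

/-- `own_Γ(x)`. -/
def ownOf (Γ : TyEnv) (x : Var) : NNReal := ((lookupTy Γ x).map Ty.own).getD 0

def TyEnv.mapLft (σ : Lft → Lft) (Γ : TyEnv) : TyEnv := Γ.map (fun p => (p.1, p.2.mapLft σ))

/-- Renaming of a program variable in a type environment (`[x'/x]Γ`). -/
def TyEnv.renameVar (x' x : Var) (Γ : TyEnv) : TyEnv :=
  Γ.map (fun p => (vsub x' x p.1, p.2))

/-- `τ↑α`. -/
def Ty.strip (α : Lft) : Ty → Ty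
  | .ref β r (some (γ, s)) => if γ = α then .ref β (r + s) none else .ref β r (some (γ, s))
  | τ => τ

/-- `Γ↑α`: drop bindings of lifetime `α` and return the borrowed ownership. -/
def TyEnv.strip (Γ : TyEnv) (α : Lft) : TyEnv :=
  (Γ.filter (fun p => decide (p.2.lft ≠ some α))).map (fun p => (p.1, p.2.strip α))

/-- Addition of borrowings (identifying `(β, 0)` with `∅`). -/
inductive BrwAdd : Option (Lft × NNReal) → Option (Lft × NNReal) → Option (Lft × NNReal) → Prop
  | none_ : BrwAdd none none none
  | both : s₁ + s₂ ≤ 1 → BrwAdd (some (β, s₁ + s₂)) (some (β, s₁)) (some (β, s₂))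
  | left : s ≤ 1 → BrwAdd (some (β, s)) (some (β, s)) none
  | right : s ≤ 1 → BrwAdd (some (β, s)) none (some (β, s))

/-- Type addition `τ = τ₁ + τ₂` (rules A-Int, A-Share, A-Borrow, A-Ex). -/
inductive TyAdd : Ty → Ty → Ty → Prop
  | int : TyAdd .int .int .int
  | share : r₁ + r₂ ≤ 1 → BrwAdd B B₁ B₂ →
      TyAdd (.ref α (r₁ + r₂) B) (.ref α r₁ B₁) (.ref α r₂ B₂)
  | borrow : TyAdd (.ref α (r + s) none) (.ref α r (some (β, s))) (.ref β s none)
  | symm : TyAdd τ τ₁ τ₂ → TyAdd τ τ₂ τ₁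

/-- Pointwise addition of type environments `Γ = Γ₁ + Γ₂`. -/
def EnvAdd (Γ Γ₁ Γ₂ : TyEnv) : Prop := ∀ x : Var,
  match List.lookup x Γ₁, List.lookup x Γ₂ with
  | some τ₁, some τ₂ => ∃ τ, List.lookup x Γ = some τ ∧ TyAdd τ τ₁ τ₂
  | some τ₁, none => List.lookup x Γ = some τ₁
  | none, some τ₂ => List.lookup x Γ = some τ₂
  | none, none => List.lookup x Γ = none

/-- Well-formedness of a type w.r.t. a lifetime environment. -/
def TyWF (L : LftEnv) : Ty → Prop
  | .int => True
  | .ref α r none => α ∈ L.dom ∧ r ≤ 1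
  | .ref α r (some (β, s)) => α ∈ L.dom ∧ β ∈ L.dom ∧ r + s ≤ 1 ∧ L.lt β α

/-- `𝓛 ⊢_WF Γ`. -/
def EnvWF (L : LftEnv) (Γ : TyEnv) : Prop := ∀ p ∈ Γ, TyWF L p.2

/-- `Γ ⊢ o : int`: every free variable of `o` has type `int` in `Γ`. -/
def AExp.IntTyped (Γ : TyEnv) : AExp → Prop
  | .const _ => True
  | .var x => List.lookup x Γ = some Ty.int
  | .binop _ o₁ o₂ => o₁.IntTyped Γ ∧ o₂.IntTyped Γ

/-- Function types `∀ᾱ:𝓛. ⟨τ₁,…,τₙ⟩ → ⟨τ₁',…,τₙ' | τ⟩`. -/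
structure FunTy : Type where
  lfts : List Lft
  lenv : LftEnv
  argTys : List Ty
  retArgTys : List Ty
  retTy : Ty

/-- Function type environments. -/
abbrev FTyEnv := FName → Option FunTy

/-- The typing judgment `Θ | 𝓛 | Γ ⊢ e : τ ▷ 𝓛' | Γ'`. -/
inductive Typed (Θ : FTyEnv) : LftEnv → TyEnv → Expr → Ty → LftEnv → TyEnv → Prop
  | var {L : LftEnv} {Γ₀ Γd Γ₁ Γ' : TyEnv} {x : Var} {τ : Ty} :
      EnvAdd Γ₁ Γ' [(x, τ)] → EnvAdd Γ₀ Γd Γ₁ →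
      Typed Θ L Γ₀ (.var x) τ L Γ'
  | fail {L L' : LftEnv} {Γ Γ' : TyEnv} {τ : Ty} :
      Typed Θ L Γ .fail τ L' Γ'
  | letVar :
      TyAdd τ τx τy → x ∉ TyEnv.dom Γ' →
      Typed Θ L ((x, τx) :: (y, τy) :: Γ) e ρ L' Γ' →
      Typed Θ L ((y, τ) :: Γ) (.letVar x y e) ρ L' Γ'
  | letArith :
      AExp.IntTyped Γ o → x ∉ TyEnv.dom Γ' →
      Typed Θ L ((x, Ty.int) :: Γ) e ρ L' Γ' →
      Typed Θ L Γ (.letArith x o e) ρ L' Γ'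
  | ifz :
      Typed Θ L ((x, Ty.int) :: Γ) e₁ ρ L' Γ' →
      Typed Θ L ((x, Ty.int) :: Γ) e₂ ρ L' Γ' →
      Typed Θ L ((x, Ty.int) :: Γ) (.ifz x e₁ e₂) ρ L' Γ'
  | call {ft : FunTy} :
      Θ f = some ft →
      βs.length = ft.lfts.length →
      ys.length = ft.argTys.length →
      LftEnv.SubC (LftEnv.map (lftSubst ft.lfts βs) ft.lenv) L →
      x ∉ TyEnv.dom Γ' →
      Typed Θ L ((x, ft.retTy.mapLft (lftSubst ft.lfts βs)) ::
          (ys.zip (ft.retArgTys.map (Ty.mapLft (lftSubst ft.lfts βs)))) ++ Γ) e ξ L' Γ' →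
      Typed Θ L ((ys.zip (ft.argTys.map (Ty.mapLft (lftSubst ft.lfts βs)))) ++ Γ)
        (.letCall x f βs ys e) ξ L' Γ'
  | mkref :
      x ∉ TyEnv.dom Γ' →
      Typed Θ L ((x, Ty.ref α 1 none) :: (y, Ty.int) :: Γ) e ρ L' Γ' →
      Typed Θ L ((y, Ty.int) :: Γ) (.letMkref x y e) ρ L' Γ'
  | deref :
      Typed Θ L ((x, Ty.int) :: (y, Ty.ref α r B) :: Γ) e ρ L' Γ' →
      Typed Θ L ((y, Ty.ref α r B) :: Γ) (.letDeref x y e) ρ L' Γ'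
  | assign :
      ownOf Γ x = 1 →
      Typed Θ L ((y, Ty.int) :: Γ) e ρ L' Γ' →
      Typed Θ L ((y, Ty.int) :: Γ) (.assign x y e) ρ L' Γ'
  | aliasA :
      TyAdd (.ref α r B) τx τy → TyAdd (.ref α r B) ρx ρy →
      Typed Θ L ((x, ρx) :: (y, ρy) :: Γ) e ρ L' Γ' →
      Typed Θ L ((x, τx) :: (y, τy) :: Γ) (.aliasAssume x y e) ρ L' Γ'
  | newlft :
      α ∉ L.dom →
      Typed Θ (L.addMin α) Γ e ρ L' Γ' →
      Typed Θ L Γ (.newlft α e) ρ L' Γ'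
  | endlft :
      L.IsMinIn α →
      Typed Θ (L.strip α) (TyEnv.strip Γ α) e ρ L' Γ' →
      Typed Θ L Γ (.endlft α e) ρ L' Γ'

/-- The return context judgment
`Θ | [] : (τ ▷ 𝓛 | Γ) ⊢ (let y = [] in e) : ρ ▷ 𝓛' | Γ'` (rule TC-Let). -/
def RetCtxTyped (Θ : FTyEnv) (τ : Ty) (L : LftEnv) (Γ : TyEnv) (y : Var) (e : Expr)
    (ρ : Ty) (L' : LftEnv) (Γ' : TyEnv) : Prop :=
  Typed Θ L ((y, τ) :: Γ) e ρ L' Γ' ∧ y ∉ TyEnv.dom Γ'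

/-- Typing of a call stack, chaining return-context judgments. -/
inductive StackTyped (Θ : FTyEnv) : Ty → LftEnv → TyEnv → List Frame → Ty → LftEnv → TyEnv → Prop
  | nil : StackTyped Θ τ L Γ [] τ L Γ
  | cons {fr : Frame} :
      RetCtxTyped Θ τ L Γ fr.x fr.e τ' L' Γ' →
      StackTyped Θ τ' L' Γ' F τ₀ L₀ Γ₀ →
      StackTyped Θ τ L Γ (fr :: F) τ₀ L₀ Γ₀

/-- Rule T-FunDef: `Θ ⊢ f ↦ ⟨ᾱ⟩(x₁,…,xₙ) e`. -/
def FunDefTyped (Θ : FTyEnv) (f : FName) (fd : FunDef) : Prop :=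
  ∃ ft : FunTy, Θ f = some ft ∧ ft.lfts = fd.lfts ∧
    (∀ α ∈ ft.lenv.dom, α ∈ fd.lfts) ∧
    fd.params.length = ft.argTys.length ∧
    fd.params.length = ft.retArgTys.length ∧
    Typed Θ ft.lenv (fd.params.zip ft.argTys) fd.body ft.retTy ft.lenv
      (fd.params.zip ft.retArgTys)

/-- `Θ ⊢ D`: all function definitions are well-typed, and `dom Θ = dom D`. -/
def DefsTyped (Θ : FTyEnv) (D : Defs) : Prop :=
  (∀ f, (Θ f).isSome ↔ (D f).isSome) ∧ ∀ f fd, D f = some fd → FunDefTyped Θ f fd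

/-- Rule T-Prog: `⊢ ⟨D, e⟩`. -/
def ProgTyped (D : Defs) (e : Expr) : Prop :=
  ∃ Θ : FTyEnv, DefsTyped Θ D ∧ ∃ τ : Ty, Typed Θ LftEnv.empty [] e τ LftEnv.empty []

/-- Well-formedness of a function type. -/
def FunTyWF (ft : FunTy) : Prop :=
  ft.lenv.IsSPO ∧ (∀ α ∈ ft.lenv.dom, α ∈ ft.lfts) ∧
  ft.argTys.length = ft.retArgTys.length ∧
  (∀ τ ∈ ft.argTys, TyWF ft.lenv τ) ∧
  (∀ τ ∈ ft.retArgTys, TyWF ft.lenv τ) ∧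
  TyWF ft.lenv ft.retTy

/-- `⊢_WF Θ`. -/
def FTyEnvWF (Θ : FTyEnv) : Prop := ∀ f ft, Θ f = some ft → FunTyWF ft

/-! ## Ownership sums and consistency -/

/-- `own^R_Γ(a)` (multiset sum over the bindings of `Γ`). -/
noncomputable def ownSum (R : Reg) (Γ : TyEnv) (a : Addr) : NNReal :=
  ((Γ.filter (fun p => decide (R p.1 = some (SrcVal.addr a)))).map (fun p => p.2.own)).sum

/-- `own^R_Γ(α; a)`. -/
noncomputable def ownLftSum (R : Reg) (Γ : TyEnv) (α : Lft) (a : Addr) : NNReal :=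
  ((Γ.filter (fun p => decide (p.2.lft = some α ∧ R p.1 = some (SrcVal.addr a)))).map
    (fun p => p.2.own)).sum

/-- `Brr^R_Γ(α ↷ β; a)`. -/
noncomputable def brrSum (R : Reg) (Γ : TyEnv) (α β : Lft) (a : Addr) : NNReal :=
  ((Γ.filter (fun p =>
      decide (p.2.lft = some α ∧ p.2.blft = some β ∧ R p.1 = some (SrcVal.addr a)))).map
    (fun p => p.2.bown)).sum

/-- `BBy^R_Γ(α; a)`. -/
noncomputable def bbySum (R : Reg) (Γ : TyEnv) (α : Lft) (a : Addr) : NNReal :=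
  ((Γ.filter (fun p => decide (p.2.blft = some α ∧ R p.1 = some (SrcVal.addr a)))).map
    (fun p => p.2.bown)).sum

/-- `BFrm^R_Γ(α; a)`. -/
noncomputable def bfrmSum (R : Reg) (Γ : TyEnv) (α : Lft) (a : Addr) : NNReal :=
  ((Γ.filter (fun p => decide (p.2.lft = some α ∧ R p.1 = some (SrcVal.addr a)))).map
    (fun p => p.2.bown)).sum

/-- Consistency `𝓛 | Γ ⊢ ⟨H, R⟩`. -/
structure Consistent (L : LftEnv) (Γ : TyEnv) (H : Heap) (R : Reg) : Prop where
  wf : EnvWF L Γ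
  fraction : ∀ a : Addr, (H a).isSome → ownSum R Γ a ≤ 1
  borrow : ∀ a : Addr, (H a).isSome → ∀ α ∈ L.dom,
    bbySum R Γ α a ≤ ownLftSum R Γ α a + bfrmSum R Γ α a
  type_int : ∀ p ∈ Γ, p.2 = Ty.int → ∃ n : ℤ, R p.1 = some (SrcVal.int n)
  type_ref : ∀ p ∈ Γ, p.2 ≠ Ty.int → ∃ a : Addr, R p.1 = some (SrcVal.addr a)
  memory : ∀ p ∈ Γ, p.2 ≠ Ty.int → ∀ a : Addr, R p.1 = some (SrcVal.addr a) →
    ∃ n : ℤ, H a = some (SrcVal.int n)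

/-- Configuration typing `⊢^D ⟨H, R, F̄, e⟩` (rule T-Conf). -/
def ConfTyped (D : Defs) (H : Heap) (R : Reg) (stk : List Frame) (e : Expr) : Prop :=
  ∃ (Θ : FTyEnv) (L Ln L₀ : LftEnv) (Γ Δ Γtot Γn Γ₀ : TyEnv) (τn τ₀ : Ty),
    DefsTyped Θ D ∧
    L.IsSPO ∧
    StackTyped Θ τn Ln Γn stk τ₀ L₀ Γ₀ ∧
    EnvAdd Γtot Γ Δ ∧
    Consistent L Γtot H R ∧
    Typed Θ L Γ e τn Ln Γn

/-! ## The target language -/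

/-- Runtime values of the target language: integers and pairs. -/
inductive TgtVal : Type
  | int (n : ℤ)
  | pair (v₁ v₂ : TgtVal)
deriving DecidableEq

abbrev TgtReg := Var → Option TgtVal

def proj1 : Option TgtVal → Option TgtVal
  | some (TgtVal.pair v _) => some v
  | _ => none

def proj2 : Option TgtVal → Option TgtVal
  | some (TgtVal.pair _ v) => some v
  | _ => none

/-- Simple expressions appearing in target terms: a variable, a projection, or
the non-deterministic value `_`. -/
inductive SExp : Type
  | var (y : Var)
  | fstv (y : Var)
  | sndv (y : Var)
  | nondet

/-- Terms of the target language. -/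
inductive Tm : Type
  | var (x : Var)
  | letArith (x : Var) (o : AExp) (t : Tm)
  | letS (x : Var) (s : SExp) (t : Tm)
  | letPair (x : Var) (s₁ s₂ : SExp) (t : Tm)
  | assume (s₁ s₂ : SExp) (t : Tm)
  | ifz (x : Var) (t₁ t₂ : Tm)
  | fail

/-- Evaluation of simple expressions (relational because of non-determinism). -/
inductive SEval (σ : TgtReg) : SExp → Option TgtVal → Prop
  | var : SEval σ (.var y) (σ y)
  | fstv : SEval σ (.fstv y) (proj1 (σ y))
  | sndv : SEval σ (.sndv y) (proj2 (σ y))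
  | nondet (n : ℤ) : SEval σ .nondet (some (.int n))

def updT (σ : TgtReg) (x : Var) (v : Option TgtVal) : TgtReg := fun z => if z = x then v else σ z

def AExp.evalT (σ : TgtReg) : AExp → Option ℤ
  | .const n => some n
  | .var x =>
    match σ x with
    | some (TgtVal.int n) => some n
    | _ => none
  | .binop f o₁ o₂ =>
    match o₁.evalT σ, o₂.evalT σ with
    | some n₁, some n₂ => some (f n₁ n₂)
    | _, _ => none

def emptyTReg : TgtReg := fun _ => none

/-- Configurations of the target language: a set of registers and a term,
or the failure state. -/
inductive TgtConf : Type
  | run (S : Set TgtReg) (t : Tm)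
  | fail

/-- One-step reduction of the target language. -/
inductive TStep : TgtConf → TgtConf → Prop
  | letArith {S : Set TgtReg} {x : Var} {o : AExp} {n : ℤ} {t : Tm} :
      (∀ σ ∈ S, AExp.evalT σ o = some n) →
      TStep (.run S (.letArith x o t)) (.run ((fun σ => updT σ x (some (.int n))) '' S) t)
  | letS {S : Set TgtReg} {x : Var} {s : SExp} {t : Tm} :
      TStep (.run S (.letS x s t))
        (.run {σ' | ∃ σ ∈ S, ∃ v, SEval σ s v ∧ σ' = updT σ x v} t)
  | letPair {S : Set TgtReg} {x : Var} {s₁ s₂ : SExp} {t : Tm} :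
      TStep (.run S (.letPair x s₁ s₂ t))
        (.run {σ' | ∃ σ ∈ S, ∃ v₁ v₂, SEval σ s₁ (some v₁) ∧ SEval σ s₂ (some v₂) ∧
                σ' = updT σ x (some (.pair v₁ v₂))} t)
  | assume {S : Set TgtReg} {s₁ s₂ : SExp} {t : Tm} :
      TStep (.run S (.assume s₁ s₂ t))
        (.run {σ | σ ∈ S ∧ ∃ v, SEval σ s₁ v ∧ SEval σ s₂ v} t)
  | ifTrue {S : Set TgtReg} {x : Var} {t₁ t₂ : Tm} :
      ({σ | σ ∈ S ∧ σ x = some (TgtVal.int 0)} : Set TgtReg).Nonempty →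
      TStep (.run S (.ifz x t₁ t₂)) (.run {σ | σ ∈ S ∧ σ x = some (TgtVal.int 0)} t₁)
  | ifFalse {S : Set TgtReg} {x : Var} {t₁ t₂ : Tm} :
      ({σ | σ ∈ S ∧ σ x ≠ some (TgtVal.int 0)} : Set TgtReg).Nonempty →
      TStep (.run S (.ifz x t₁ t₂)) (.run {σ | σ ∈ S ∧ σ x ≠ some (TgtVal.int 0)} t₂)
  | fail {S : Set TgtReg} :
      TStep (.run S .fail) .fail

/-! ## The type-directed translation -/

/-- `Nullify(τ)`: deprive a type of all its ownership. -/
def nullify : Ty → Ty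
  | .int => .int
  | .ref α _ _ => .ref α 0 none

open Classical in
/-- The first three cases of the auxiliary function `TrAlias`. -/
noncomputable def trAliasCore (τx ρx τy ρy : Ty) (x y : Var) (t : Tm) : Option Tm :=
  if τx.own = 0 ∧ ρx.own = 0 then some t
  else if 0 < τy.own ∧ 0 < ρx.own ∧ 0 < ρy.own then
    some (.letPair x (.fstv y) (.sndv x) t)
  else if 0 < τx.own ∧ ρx.own = 0 then
    some (.letPair y (.fstv x) (.sndv y) (.letPair x (.sndv y) (.sndv x) t))
  else none

/-- `TrAlias_{τx→ρx, τy→ρy}(x, y, t)`: the last case swaps the arguments. -/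
noncomputable def trAlias (τx ρx τy ρy : Ty) (x y : Var) (t : Tm) : Tm :=
  match trAliasCore τx ρx τy ρy x y t with
  | some t' => t'
  | none => (trAliasCore τy ρy τx ρx y x t).getD t

/-- The variables of `Γ` whose type has lifetime `α` (dropped by `Γ↑α`). -/
def droppedVars (Γ : TyEnv) (α : Lft) : List Var :=
  (Γ.filter (fun p => decide (p.2.lft = some α))).map Prod.fst

/-- The type-directed translation judgment `𝓛 | Γ ⊢ e : τ ⇒ t`
(intraprocedural fragment). -/
inductive Trans : LftEnv → TyEnv → Expr → Ty → Tm → Prop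
  | letVar :
      TyAdd τ τx τy →
      Trans L ((x, τx) :: (y, τy) :: Γ) e ρ t →
      Trans L ((y, τ) :: Γ) (.letVar x y e) ρ
        (.letPair x .nondet .nondet (trAlias (nullify τ) τx τ τy x y t))
  | letArith :
      AExp.IntTyped Γ o →
      Trans L ((x, Ty.int) :: Γ) e ρ t →
      Trans L Γ (.letArith x o e) ρ (.letArith x o t)
  | ifz :
      Trans L ((x, Ty.int) :: Γ) e₁ ρ t₁ →
      Trans L ((x, Ty.int) :: Γ) e₂ ρ t₂ →
      Trans L ((x, Ty.int) :: Γ) (.ifz x e₁ e₂) ρ (.ifz x t₁ t₂)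
  | fail : Trans L Γ .fail τ .fail
  | mkref :
      Trans L ((x, Ty.ref α 1 none) :: (y, Ty.int) :: Γ) e ρ t →
      Trans L ((y, Ty.int) :: Γ) (.letMkref x y e) ρ (.letPair x (.var y) .nondet t)
  | derefPos :
      0 < r →
      Trans L ((x, Ty.int) :: (y, Ty.ref α r B) :: Γ) e ρ t →
      Trans L ((y, Ty.ref α r B) :: Γ) (.letDeref x y e) ρ (.letS x (.fstv y) t)
  | derefZero :
      Trans L ((x, Ty.int) :: (y, Ty.ref α 0 B) :: Γ) e ρ t →
      Trans L ((y, Ty.ref α 0 B) :: Γ) (.letDeref x y e) ρ (.letS x .nondet t)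
  | assign :
      ownOf Γ x = 1 →
      Trans L Γ e ρ t →
      Trans L Γ (.assign x y e) ρ (.letPair x (.var y) (.sndv x) t)
  | aliasA :
      TyAdd (.ref α r B) τx τy → TyAdd (.ref α r B) ρx ρy →
      Trans L ((x, ρx) :: (y, ρy) :: Γ) e ρ t →
      Trans L ((x, τx) :: (y, τy) :: Γ) (.aliasAssume x y e) ρ (trAlias τx ρx τy ρy x y t)
  | newlft :
      α ∉ L.dom →
      Trans (L.addMin α) Γ e ρ t →
      Trans L Γ (.newlft α e) ρ t
  | endlft :
      L.IsMinIn α →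
      Trans (L.strip α) (TyEnv.strip Γ α) e ρ t →
      Trans L Γ (.endlft α e) ρ
        ((droppedVars Γ α).foldr (fun z acc => .assume (.fstv z) (.sndv z) acc) t)

/-! ## Prophecy chains and the simulation relation -/

/-- Correspondence between source values and target values (both possibly
undefined), used for comparing integer contents. -/
def svEq : Option SrcVal → Option TgtVal → Prop
  | none, none => True
  | some (SrcVal.int n), some (TgtVal.int m) => n = m
  | _, _ => False

/-- A prophecy chain `Chain^{R,σ}_Γ(x₁, …, xₙ)`. -/
def Chain (Γ : TyEnv) (R : Reg) (σ : TgtReg) (xs : List Var) : Prop :=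
  xs ≠ [] ∧
  (∃ a : Addr, ∀ x ∈ xs, R x = some (SrcVal.addr a)) ∧
  (∀ (i : ℕ) (h : i < xs.length),
      ∃ τ : Ty, List.lookup (xs[i]'h) Γ = some τ ∧
        (if i = xs.length - 1 then 0 < τ.own else τ.own = 0)) ∧
  (∀ (i : ℕ) (h : i + 1 < xs.length),
      proj1 (σ (xs[i]'(Nat.lt_of_succ_lt h))) = proj2 (σ (xs[i + 1]'h)) ∧
      ∃ τi τj : Ty,
        List.lookup (xs[i]'(Nat.lt_of_succ_lt h)) Γ = some τi ∧
        List.lookup (xs[i + 1]'h) Γ = some τj ∧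
        (match τi.blft with
          | some β => τj.lft = some β
          | none => τj.lft = τi.lft))

/-- `x` occurs with a reference type in `Γ`. -/
def IsRefVar (Γ : TyEnv) (x : Var) : Prop :=
  ∃ (α : Lft) (r : NNReal) (B : Option (Lft × NNReal)), (x, Ty.ref α r B) ∈ Γ

/-- The simulation relation `⟨H, R, e⟩ ∼_{𝓛,Γ} ⟨𝒮, t⟩`. -/
def Sim (L : LftEnv) (Γ : TyEnv) (H : Heap) (R : Reg) (e : Expr)
    (S : Set TgtReg) (t : Tm) : Prop :=
  (∃ τ : Ty, Trans L Γ e τ t) ∧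
  (∀ (x : Var) (α β : Lft) (s : NNReal),
      ((x, Ty.ref α 0 (some (β, s))) ∈ Γ) →
      ∃ ys : List Var, (∀ y ∈ ys, y ∈ TyEnv.dom Γ) ∧
        ∀ σ ∈ S, Chain Γ R σ (x :: ys)) ∧
  (∀ g : Var → ℤ, ∃ σ ∈ S,
      (∀ x : Var, IsRefVar Γ x → proj2 (σ x) = some (TgtVal.int (g x))) ∧
      (∀ x : Var, ((x, Ty.int) ∈ Γ) → svEq (R x) (σ x)) ∧
      (∀ (x : Var) (α : Lft) (r : NNReal) (B : Option (Lft × NNReal)),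
          ((x, Ty.ref α r B) ∈ Γ) → 0 < r →
          ∀ a : Addr, R x = some (SrcVal.addr a) → svEq (H a) (proj1 (σ x))))

/-! Since `α` is minimal, well-formedness forbids bindings of lifetime `α` to borrow, so
`BFrm(α) = 0` and the borrow condition at `α` reads `BBy(α; a) ≤ own(α; a)`. Terminating `α`
drops the ownership `own(α; a)` and hands `BBy(α; a)` back to the lenders, so `own(a)` does not
grow. For `β ≠ α`, termination only moves fractions of `β`-bindings from their borrowed to their
owned part, which leaves both sides of the borrow condition at `β` unchanged. -/

theorem _root_.List.sum_map_filter_eq_sum_map_ite {ι M : Type*} [AddCommMonoid M] (l : List ι)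
    (P : ι → Prop) [DecidablePred P] (f : ι → M) :
    ((l.filter P).map f).sum = (l.map fun i => if P i then f i else 0).sum := by
  simp [List.sum_map_ite]

namespace Ty

lemma lft_strip (α : Lft) (τ : Ty) : (τ.strip α).lft = τ.lft := by
  rcases τ with _ | ⟨β, r, _ | ⟨γ, s⟩⟩ <;> simp only [strip]
  split_ifs <;> rfl

lemma strip_eq_int_iff {α : Lft} {τ : Ty} : τ.strip α = .int ↔ τ = .int := by
  rcases τ with _ | ⟨β, r, _ | ⟨γ, s⟩⟩ <;> simp only [strip, reduceCtorEq]
  split_ifs <;> simp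

lemma own_strip (α : Lft) (τ : Ty) :
    (τ.strip α).own = τ.own + if τ.blft = some α then τ.bown else 0 := by
  rcases τ with _ | ⟨β, r, _ | ⟨γ, s⟩⟩ <;> simp only [strip] <;> split_ifs <;>
    simp_all [own, bown, blft]

lemma own_add_bown_strip (α : Lft) (τ : Ty) :
    (τ.strip α).own + (τ.strip α).bown = τ.own + τ.bown := by
  rcases τ with _ | ⟨β, r, _ | ⟨γ, s⟩⟩ <;> simp only [strip]
  split_ifs <;> simp [own, bown]

lemma ite_blft_bown_strip_of_ne {α β : Lft} (τ : Ty) (h : β ≠ α) :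
    (if (τ.strip α).blft = some β then (τ.strip α).bown else 0) =
      if τ.blft = some β then τ.bown else 0 := by
  rcases τ with _ | ⟨δ, r, _ | ⟨γ, s⟩⟩ <;> simp only [strip] <;> split_ifs <;>
    simp_all [blft]

lemma bown_eq_zero_of_blft_eq_none {τ : Ty} (h : τ.blft = none) : τ.bown = 0 := by
  rcases τ with _ | ⟨β, r, _ | ⟨γ, s⟩⟩ <;> simp_all [blft, bown]

end Ty

lemma TyWF.strip {L : LftEnv} {α : Lft} {τ : Ty} (hτ : TyWF L τ) (hα : τ.lft ≠ some α) :
    TyWF (L.strip α) (τ.strip α) := by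
  rcases τ with _ | ⟨β, r, _ | ⟨γ, s⟩⟩
  · trivial
  · simp_all [TyWF, Ty.strip, LftEnv.strip, Ty.lft]
  · simp only [Ty.strip]
    split_ifs <;> simp_all [TyWF, LftEnv.strip, Ty.lft]

lemma TyWF.blft_eq_none {L : LftEnv} {α : Lft} {τ : Ty} (hτ : TyWF L τ)
    (hmin : ∀ β, ¬ L.lt β α) (hα : τ.lft = some α) : τ.blft = none := by
  rcases τ with _ | ⟨β, r, _ | ⟨γ, s⟩⟩
  · rfl
  · rfl
  · simp only [Ty.lft, Option.some_inj] at hα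
    exact absurd (hα ▸ hτ.2.2.2) (hmin γ)

namespace TyEnv

lemma forall_mem_strip {Γ : TyEnv} {α : Lft} {P : Var × Ty → Prop} :
    (∀ p ∈ TyEnv.strip Γ α, P p) ↔ ∀ q ∈ Γ, q.2.lft ≠ some α → P (q.1, q.2.strip α) := by
  simp only [TyEnv.strip, List.forall_mem_map, List.mem_filter, and_imp, decide_eq_true_eq]

lemma sum_map_strip {M : Type*} [AddCommMonoid M] (Γ : TyEnv) (α : Lft) (f : Var × Ty → M) :
    ((TyEnv.strip Γ α).map f).sum =
      (Γ.map fun p => if p.2.lft = some α then 0 else f (p.1, p.2.strip α)).sum := by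
  simp only [TyEnv.strip, List.map_map, List.sum_map_filter_eq_sum_map_ite]
  congr 1
  refine List.map_congr_left fun p _ => ?_
  split_ifs <;> simp_all

end TyEnv

section Sums

variable (R : Reg) (a : Addr) (α : Lft) {Γ : TyEnv}

lemma ownSum_strip_add_ownLftSum (hα : ∀ p ∈ Γ, p.2.lft = some α → p.2.blft = none) :
    ownSum R (TyEnv.strip Γ α) a + ownLftSum R Γ α a = ownSum R Γ a + bbySum R Γ α a := by
  simp only [ownSum, ownLftSum, bbySum, List.sum_map_filter_eq_sum_map_ite,
    TyEnv.sum_map_strip, ← List.sum_map_add]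
  congr 1
  refine List.map_congr_left fun p hp => ?_
  have := hα p hp
  by_cases hR : R p.1 = some (.addr a) <;> by_cases hl : p.2.lft = some α <;>
    simp_all [Ty.own_strip]

lemma bfrmSum_eq_zero (hα : ∀ p ∈ Γ, p.2.lft = some α → p.2.blft = none) :
    bfrmSum R Γ α a = 0 := by
  simp only [bfrmSum, List.sum_map_filter_eq_sum_map_ite]
  refine List.sum_eq_zero fun x hx => ?_
  obtain ⟨p, hp, rfl⟩ := List.mem_map.1 hx
  split_ifs with h
  · exact Ty.bown_eq_zero_of_blft_eq_none (hα p hp h.1)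
  · rfl

variable {α} {β : Lft}

lemma bbySum_strip_of_ne (hβ : β ≠ α) (hα : ∀ p ∈ Γ, p.2.lft = some α → p.2.blft = none) :
    bbySum R (TyEnv.strip Γ α) β a = bbySum R Γ β a := by
  simp only [bbySum, List.sum_map_filter_eq_sum_map_ite, TyEnv.sum_map_strip]
  congr 1
  refine List.map_congr_left fun p hp => ?_
  have := Ty.ite_blft_bown_strip_of_ne p.2 hβ
  have := hα p hp
  by_cases hR : R p.1 = some (.addr a) <;> by_cases hl : p.2.lft = some α <;>
    split_ifs at * <;> simp_all

lemma ownLftSum_add_bfrmSum_strip_of_ne (hβ : β ≠ α) :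
    ownLftSum R (TyEnv.strip Γ α) β a + bfrmSum R (TyEnv.strip Γ α) β a =
      ownLftSum R Γ β a + bfrmSum R Γ β a := by
  simp only [ownLftSum, bfrmSum, List.sum_map_filter_eq_sum_map_ite, TyEnv.sum_map_strip,
    ← List.sum_map_add]
  congr 1
  refine List.map_congr_left fun p hp => ?_
  have := Ty.own_add_bown_strip α p.2
  by_cases hR : R p.1 = some (.addr a) <;> by_cases hl : p.2.lft = some α <;>
    by_cases hlβ : p.2.lft = some β <;> simp_all [Ty.lft_strip]

end Sums

theorem statement10_general {L : LftEnv} {Γ : TyEnv} {H : Heap} {R : Reg} {α : Lft}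
    (hc : Consistent L Γ H R)
    (hmin : L.IsMinIn α) :
    Consistent (L.strip α) (TyEnv.strip Γ α) H R := by
  have hα : ∀ p ∈ Γ, p.2.lft = some α → p.2.blft = none := fun p hp =>
    (hc.wf p hp).blft_eq_none hmin.2
  refine ⟨TyEnv.forall_mem_strip.2 fun q hq hqα => (hc.wf q hq).strip hqα, fun a ha => ?_,
    fun a ha β hβ => ?_, ?_, ?_, ?_⟩
  · have hbby : bbySum R Γ α a ≤ ownLftSum R Γ α a := by
      simpa [bfrmSum_eq_zero R a α hα] using hc.borrow a ha α hmin.1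
    have hown : ownSum R (TyEnv.strip Γ α) a + ownLftSum R Γ α a ≤
        ownSum R Γ a + ownLftSum R Γ α a := by
      rw [ownSum_strip_add_ownLftSum R a α hα]
      gcongr
    exact (le_of_add_le_add_right hown).trans (hc.fraction a ha)
  · obtain ⟨hβα, hβ⟩ := Finset.mem_erase.1 hβ
    rw [bbySum_strip_of_ne R a hβα hα, ownLftSum_add_bfrmSum_strip_of_ne R a hβα]
    exact hc.borrow a ha β hβ
  all_goals refine TyEnv.forall_mem_strip.2 fun q hq _ h => ?_
  · exact hc.type_int q hq (Ty.strip_eq_int_iff.1 h)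
  · exact hc.type_ref q hq (mt Ty.strip_eq_int_iff.2 h)
  · exact hc.memory q hq (mt Ty.strip_eq_int_iff.2 h)

/-- Lemma 7, part 3: consistency is preserved under lifetime
termination.  If `𝓛 | Γ ⊢ ⟨H, R⟩` and `α` is a minimal element of `𝓛`, then
`𝓛↑α | Γ↑α ⊢ ⟨H, R⟩`. -/
theorem statement10 {L : LftEnv} {Γ : TyEnv} {H : Heap} {R : Reg} {α : Lft}
    (hL : L.IsSPO)
    (hc : Consistent L Γ H R)
    (hmin : L.IsMinIn α) :
    Consistent (L.strip α) (TyEnv.strip Γ α) H R :=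
  statement10_general hc hmin

end BorFrac
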